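/- For any N×d complex matrix D (d ≤ N) whose columns d_1,…,N have unit ℓ²-norm, the coherence μ = max_{i≠j} |⟨d_i, d_j⟩| satisfies the Welch lower bound μ ≥ √((N − d)/(d(N − 1))), provided N > d ≥ 1. -/

import Mathlib

open Matrix

/-- The coherence of a dictionary: the maximum absolute inner product between distinct
columns, `μ = max_{i≠j} |⟨d_i, d_j⟩|`. -/
noncomputable def coherence {m n : Type*} [Fintype m] [Fintype n] (D : Matrix m n ℂ) : ℝ :=
  sSup {r | ∃ i j, i ≠ j ∧ r = ‖(Dᴴ * D) i j‖}

/-!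
Let `G = Dᴴ D` be the Gram matrix of the columns and `A = D Dᴴ` the `d × d` frame operator.
Both have the same Frobenius norm, since `tr (G²) = tr (A²)`. The trace of `A` equals that of
`G`, namely `N`, so Cauchy–Schwarz on the diagonal of `A` gives `‖A‖_F² ≥ N² / d`. On the other
hand `‖G‖_F² ≤ N + N (N - 1) μ²`, as the diagonal of `G` is `1` and each of the `N (N - 1)`
off-diagonal entries has modulus at most `μ`. Comparing the two bounds gives the Welch bound.
-/

namespace Matrix

variable {𝕜 : Type*} [RCLike 𝕜] {m n : Type*} [Fintype m]

theorem conjTranspose_mul_self_apply_self (A : Matrix m n 𝕜) (j : n) :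
    (Aᴴ * A) j j = ((∑ i, ‖A i j‖ ^ 2 : ℝ) : 𝕜) := by
  simp [mul_apply, RCLike.conj_mul]

theorem trace_conjTranspose_mul_self [Fintype n] (A : Matrix m n 𝕜) :
    (Aᴴ * A).trace = ((∑ i, ∑ j, ‖A i j‖ ^ 2 : ℝ) : 𝕜) := by
  rw [Finset.sum_comm]
  simp only [trace, diag, conjTranspose_mul_self_apply_self, RCLike.ofReal_sum]

theorem sum_norm_sq_conjTranspose_mul_self_eq [Fintype n] (D : Matrix m n 𝕜) :
    ∑ i, ∑ j, ‖(Dᴴ * D) i j‖ ^ 2 = ∑ a, ∑ b, ‖(D * Dᴴ) a b‖ ^ 2 := by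
  have hG : (Dᴴ * D)ᴴ = Dᴴ * D := by simp [conjTranspose_mul]
  have hA : (D * Dᴴ)ᴴ = D * Dᴴ := by simp [conjTranspose_mul]
  have key : ((Dᴴ * D)ᴴ * (Dᴴ * D)).trace = ((D * Dᴴ)ᴴ * (D * Dᴴ)).trace := by
    rw [hG, hA, Matrix.mul_assoc, trace_mul_comm, Matrix.mul_assoc, Matrix.mul_assoc,
      ← Matrix.mul_assoc D]
  rw [trace_conjTranspose_mul_self, trace_conjTranspose_mul_self] at key
  exact_mod_cast key

theorem norm_trace_sq_le_card_mul_sum_norm_sq [Fintype n] (A : Matrix n n 𝕜) :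
    ‖A.trace‖ ^ 2 ≤ Fintype.card n * ∑ i, ∑ j, ‖A i j‖ ^ 2 := by
  calc ‖A.trace‖ ^ 2 ≤ (∑ i, ‖A i i‖) ^ 2 := by
        gcongr
        exact norm_sum_le _ _
    _ ≤ Fintype.card n * ∑ i, ‖A i i‖ ^ 2 := by
        simpa using sq_sum_le_card_mul_sum_sq (s := Finset.univ) (f := fun i => ‖A i i‖)
    _ ≤ Fintype.card n * ∑ i, ∑ j, ‖A i j‖ ^ 2 := by
        gcongr with i
        exact Finset.single_le_sum (f := fun j => ‖A i j‖ ^ 2) (fun _ _ => sq_nonneg _)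
          (Finset.mem_univ i)

end Matrix

section Coherence

variable {m n : Type*} [Fintype m] [Fintype n]

theorem coherence_nonneg (D : Matrix m n ℂ) : 0 ≤ coherence D :=
  Real.sSup_nonneg <| by
    rintro _ ⟨i, j, -, rfl⟩
    exact norm_nonneg _

theorem norm_conjTranspose_mul_self_apply_le_coherence (D : Matrix m n ℂ) {i j : n}
    (hij : i ≠ j) :
    ‖(Dᴴ * D) i j‖ ≤ coherence D := by
  refine le_csSup ?_ ⟨i, j, hij, rfl⟩
  refine (Set.finite_range fun p : n × n => ‖(Dᴴ * D) p.1 p.2‖).bddAbove.mono ?_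
  rintro _ ⟨i, j, -, rfl⟩
  exact ⟨(i, j), rfl⟩

theorem sum_norm_sq_conjTranspose_mul_self_le (D : Matrix m n ℂ) :
    ∑ i, ∑ j, ‖(Dᴴ * D) i j‖ ^ 2 ≤
      ∑ i, ‖(Dᴴ * D) i i‖ ^ 2 + Fintype.card n * (Fintype.card n - 1) * coherence D ^ 2 := by
  classical
  have row (i : n) : ∑ j, ‖(Dᴴ * D) i j‖ ^ 2 ≤
      ‖(Dᴴ * D) i i‖ ^ 2 + (Fintype.card n - 1) * coherence D ^ 2 := by
    rw [← Finset.add_sum_erase _ _ (Finset.mem_univ i)]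
    gcongr
    calc ∑ j ∈ Finset.univ.erase i, ‖(Dᴴ * D) i j‖ ^ 2
        ≤ ∑ _j ∈ Finset.univ.erase i, coherence D ^ 2 := by
          gcongr with j hj
          exact norm_conjTranspose_mul_self_apply_le_coherence D (Finset.ne_of_mem_erase hj).symm
      _ = (Fintype.card n - 1) * coherence D ^ 2 := by
          rw [Finset.sum_const, nsmul_eq_mul, Finset.card_erase_of_mem (Finset.mem_univ i),
            Finset.card_univ, Nat.cast_pred (Fintype.card_pos_iff.mpr ⟨i⟩)]
  calc ∑ i, ∑ j, ‖(Dᴴ * D) i j‖ ^ 2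
      ≤ ∑ i, (‖(Dᴴ * D) i i‖ ^ 2 + (Fintype.card n - 1) * coherence D ^ 2) :=
        Finset.sum_le_sum fun i _ => row i
    _ = _ := by
        rw [Finset.sum_add_distrib, Finset.sum_const, Finset.card_univ, nsmul_eq_mul, mul_assoc]

end Coherence

theorem welch_bound_general {d N : ℕ} (hdN : d < N)
    (D : Matrix (Fin d) (Fin N) ℂ) (hunit : ∀ j, ∑ i, ‖D i j‖ ^ 2 = 1) :
    Real.sqrt (((N : ℝ) - d) / (d * ((N : ℝ) - 1))) ≤ coherence D := by
  have hdiag (j : Fin N) : ‖(Dᴴ * D) j j‖ = 1 := by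
    simp [conjTranspose_mul_self_apply_self, hunit]
  have htrace : (D * Dᴴ).trace = N := by
    simpa [hunit] using trace_conjTranspose_mul_self Dᴴ
  have hupper := sum_norm_sq_conjTranspose_mul_self_le D
  have hlower := norm_trace_sq_le_card_mul_sum_norm_sq (D * Dᴴ)
  rw [sum_norm_sq_conjTranspose_mul_self_eq] at hupper
  simp only [hdiag, htrace, Fintype.card_fin, one_pow, Finset.sum_const, Finset.card_univ,
    nsmul_eq_mul, mul_one, Complex.norm_natCast] at hupper hlower
  set μ := coherence D
  have hN : (1 : ℝ) ≤ N := by exact_mod_cast hdN.pos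
  have hsq : (N : ℝ) * N ≤ N * (d + μ ^ 2 * (d * (N - 1))) := by
    linarith [mul_le_mul_of_nonneg_left hupper (Nat.cast_nonneg (α := ℝ) d)]
  have hkey : (N : ℝ) - d ≤ μ ^ 2 * (d * (N - 1)) := by
    linarith [le_of_mul_le_mul_left hsq (by linarith)]
  rw [Real.sqrt_le_left (coherence_nonneg D)]
  exact div_le_of_le_mul₀ (mul_nonneg d.cast_nonneg (by linarith)) (sq_nonneg μ) hkey

/-- The Welch lower bound: for a `d × N` complex matrix `D` with `N > d ≥ 1` whose columns
have unit ℓ²-norm, the coherence satisfies `μ ≥ √((N − d)/(d(N − 1)))`. -/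
theorem welch_bound {d N : ℕ} (hd : 1 ≤ d) (hdN : d < N)
    (D : Matrix (Fin d) (Fin N) ℂ) (hunit : ∀ j, ∑ i, ‖D i j‖ ^ 2 = 1) :
    Real.sqrt (((N : ℝ) - d) / (d * ((N : ℝ) - 1))) ≤ coherence D :=
  welch_bound_general hdN D hunit
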